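/- Let L be a first-order language and let ψ be a quantifier-free L-formula with n free variables. If there exist an L-structure M and a tuple a : Fin n → M such that ψ(a) holds in M, then there exist a finite nonempty L-structure M' and a tuple a' : Fin n → M' such that ψ(a') holds in M'. (Quantifier-free formulas have the finite model property for satisfiability.) -/

import Mathlib

/-!
Only finitely many elements of `M` matter for the truth of `ψ(a)`: the values of the subterms
of the terms occurring in `ψ`. Collect them in a finite set `A` and add one junk element, to
which every function application leaving `A` is sent. On `Option A` every term of `ψ` then
evaluates as in `M`, so the atomic subformulas of `ψ`, and hence `ψ` itself, keep their truth
values.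
-/

open FirstOrder FirstOrder.Language

namespace FirstOrder.Language

variable {L : Language} {M : Type*} [L.Structure M] {α : Type*}

namespace Term

def subtermValues (v : α → M) : L.Term α → Set M
  | var i => {v i}
  | func f ts => insert (Structure.funMap f fun i => (ts i).realize v) (⋃ i, (ts i).subtermValues v)

theorem finite_subtermValues (v : α → M) (t : L.Term α) : (t.subtermValues v).Finite := by
  induction t with
  | var i => exact Set.finite_singleton _
  | func f ts ih => exact (Set.finite_iUnion ih).insert _

theorem realize_mem_subtermValues (v : α → M) (t : L.Term α) : t.realize v ∈ t.subtermValues v := by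
  cases t with
  | var i => exact Set.mem_singleton _
  | func f ts => exact Set.mem_insert _ _

theorem subtermValues_subset_func (v : α → M) {l : ℕ} (f : L.Functions l)
    (ts : Fin l → L.Term α) (i : Fin l) : (ts i).subtermValues v ⊆ (func f ts).subtermValues v :=
  (Set.subset_iUnion (fun j => (ts j).subtermValues v) i).trans (Set.subset_insert _ _)

end Term

namespace BoundedFormula

/-- Quantified subformulas contribute nothing, so this is the right set only for quantifier-free
formulas. -/
def qfSubtermValues (v : α → M) : ∀ {m : ℕ}, (Fin m → M) → L.BoundedFormula α m → Set M
  | _, _, falsum => ∅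
  | _, xs, equal t₁ t₂ => t₁.subtermValues (Sum.elim v xs) ∪ t₂.subtermValues (Sum.elim v xs)
  | _, xs, rel _ ts => ⋃ i, (ts i).subtermValues (Sum.elim v xs)
  | _, xs, imp φ ψ => φ.qfSubtermValues v xs ∪ ψ.qfSubtermValues v xs
  | _, _, all _ => ∅

theorem finite_qfSubtermValues (v : α → M) :
    ∀ {m : ℕ} (xs : Fin m → M) (φ : L.BoundedFormula α m), (φ.qfSubtermValues v xs).Finite
  | _, _, falsum => Set.finite_empty
  | _, xs, equal t₁ t₂ =>
    (t₁.finite_subtermValues (Sum.elim v xs)).union (t₂.finite_subtermValues (Sum.elim v xs))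
  | _, xs, rel _ ts => Set.finite_iUnion fun i => (ts i).finite_subtermValues (Sum.elim v xs)
  | _, xs, imp φ ψ => (finite_qfSubtermValues v xs φ).union (finite_qfSubtermValues v xs ψ)
  | _, _, all _ => Set.finite_empty

end BoundedFormula

variable (A : Set M)

open Classical in
noncomputable def truncate (m : M) : Option A :=
  if h : m ∈ A then some ⟨m, h⟩ else none

theorem truncate_of_mem {m : M} (h : m ∈ A) : truncate A m = some ⟨m, h⟩ :=
  dif_pos h

theorem truncate_comp_of_forall_mem {k : ℕ} {w : Fin k → M} (hw : ∀ i, w i ∈ A) :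
    truncate A ∘ w = fun i => some ⟨w i, hw i⟩ :=
  funext fun i => truncate_of_mem A (hw i)

theorem truncate_injOn : Set.InjOn (truncate A) A := fun m hm m' hm' h => by
  rw [truncate_of_mem A hm, truncate_of_mem A hm'] at h
  exact congrArg Subtype.val (Option.some_injective _ h)

/-- `none` is the junk element: it absorbs every application whose value in `M` leaves `A`. -/
@[reducible] noncomputable def truncatedStructure : L.Structure (Option A) where
  funMap f x :=
    if h : ∀ i, (x i).isSome then truncate A (Structure.funMap f fun i => ((x i).get (h i) : M))
    else none
  RelMap R x := ∃ h : ∀ i, (x i).isSome, Structure.RelMap R fun i => ((x i).get (h i) : M)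

attribute [local instance] truncatedStructure

variable {A}

theorem funMap_truncate {k : ℕ} (f : L.Functions k) {w : Fin k → M} (hw : ∀ i, w i ∈ A) :
    Structure.funMap f (truncate A ∘ w) = truncate A (Structure.funMap f w) := by
  rw [truncate_comp_of_forall_mem A hw]
  exact dif_pos fun _ => rfl

theorem relMap_truncate {k : ℕ} (R : L.Relations k) {w : Fin k → M} (hw : ∀ i, w i ∈ A) :
    Structure.RelMap R (truncate A ∘ w) ↔ Structure.RelMap R w := by
  rw [truncate_comp_of_forall_mem A hw]
  exact ⟨fun ⟨_, h⟩ => h, fun h => ⟨fun _ => rfl, h⟩⟩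

theorem Term.realize_truncate {t : L.Term α} {w : α → M} (ht : t.subtermValues w ⊆ A) :
    t.realize (truncate A ∘ w) = truncate A (t.realize w) := by
  induction t with
  | var i => rfl
  | func f ts ih =>
    have hts i : (ts i).subtermValues w ⊆ A := (subtermValues_subset_func w f ts i).trans ht
    have hargs : (fun i => (ts i).realize (truncate A ∘ w)) = truncate A ∘ fun i => (ts i).realize w :=
      funext fun i => ih i (hts i)
    simp only [Term.realize, hargs]
    exact funMap_truncate f fun i => hts i ((ts i).realize_mem_subtermValues w)

theorem BoundedFormula.IsQF.realize_truncate {m : ℕ} {φ : L.BoundedFormula α m} (hφ : φ.IsQF)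
    {v : α → M} {xs : Fin m → M} (hA : φ.qfSubtermValues v xs ⊆ A) :
    φ.Realize (truncate A ∘ v) (truncate A ∘ xs) ↔ φ.Realize v xs := by
  have hvxs : Sum.elim (truncate A ∘ v) (truncate A ∘ xs) = truncate A ∘ Sum.elim v xs :=
    (Sum.comp_elim _ _ _).symm
  induction hφ with
  | falsum => rfl
  | of_isAtomic hatom =>
    cases hatom with
    | equal t₁ t₂ =>
      obtain ⟨h₁, h₂⟩ := Set.union_subset_iff.mp hA
      rw [realize_bdEqual, realize_bdEqual, hvxs, Term.realize_truncate h₁, Term.realize_truncate h₂]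
      exact (truncate_injOn A).eq_iff (h₁ (t₁.realize_mem_subtermValues _))
        (h₂ (t₂.realize_mem_subtermValues _))
    | rel R ts =>
      have hts i : (ts i).subtermValues (Sum.elim v xs) ⊆ A :=
        (Set.subset_iUnion (fun j => (ts j).subtermValues (Sum.elim v xs)) i).trans hA
      have hargs : (fun i => (ts i).realize (truncate A ∘ Sum.elim v xs)) =
          truncate A ∘ fun i => (ts i).realize (Sum.elim v xs) :=
        funext fun i => Term.realize_truncate (hts i)
      rw [realize_rel, realize_rel, hvxs, hargs]
      exact relMap_truncate R fun i => hts i ((ts i).realize_mem_subtermValues _)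
  | imp _ _ ih₁ ih₂ =>
    obtain ⟨h₁, h₂⟩ := Set.union_subset_iff.mp hA
    exact imp_congr (ih₁ h₁) (ih₂ h₂)

end FirstOrder.Language

theorem qf_finite_model_property.{u}
    {L : FirstOrder.Language} {n : ℕ} (ψ : L.BoundedFormula Empty n)
    (hqf : ψ.IsQF)
    (h : ∃ (M : Type u) (S : L.Structure M) (a : Fin n → M),
      @FirstOrder.Language.BoundedFormula.Realize L M S Empty n ψ Empty.elim a) :
    ∃ (M' : Type u) (S' : L.Structure M'), Finite M' ∧ Nonempty M' ∧
      ∃ a' : Fin n → M',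
        @FirstOrder.Language.BoundedFormula.Realize L M' S' Empty n ψ Empty.elim a' := by
  obtain ⟨M, S, a, ha⟩ := h
  set A := ψ.qfSubtermValues Empty.elim a
  have : Finite A := (ψ.finite_qfSubtermValues Empty.elim a).to_subtype
  have hrealize := (hqf.realize_truncate (A := A) subset_rfl).mpr ha
  rw [Subsingleton.elim (truncate A ∘ Empty.elim) Empty.elim] at hrealize
  exact ⟨Option A, truncatedStructure A, inferInstance, ⟨none⟩, truncate A ∘ a, hrealize⟩
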